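/- arXiv:1003.1320 — 2 statements merged into one kernel-verified Lean document; each statement's English description precedes it below -/
import Mathlib

section
/- In a graph with unique shortest paths, the intersection of two distinct isometric cycles C and C' is either empty or a single shortest path. -/
open SimpleGraph

/-- The weight of a walk: sum of its edge weights. -/
def walkWeight {V : Type*} {G : SimpleGraph V} (w : Sym2 V → ℝ) {u v : V}
    (p : G.Walk u v) : ℝ :=
  (p.edges.map w).sum

/-- `p` is a shortest `u`-`v` path with respect to `w`. -/
def IsShortest {V : Type*} (G : SimpleGraph V) (w : Sym2 V → ℝ) {u v : V}
    (p : G.Walk u v) : Prop :=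
  p.IsPath ∧ ∀ q : G.Walk u v, q.IsPath → walkWeight w p ≤ walkWeight w q

/-- Shortest paths in `G` (w.r.t. `w`) are unique between every pair of vertices. -/
def UniqueShortestPaths {V : Type*} (G : SimpleGraph V) (w : Sym2 V → ℝ) : Prop :=
  ∀ (u v : V) (p q : G.Walk u v), IsShortest G w p → IsShortest G w q → p = q

/-- A cycle `c` is isometric: for any two vertices on `c`, some shortest path
between them in `G` is contained in `c`. -/
def IsIsometric {V : Type*} (G : SimpleGraph V) (w : Sym2 V → ℝ) {r : V}
    (c : G.Walk r r) : Prop :=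
  ∀ u v : V, u ∈ c.support → v ∈ c.support →
    ∃ p : G.Walk u v, IsShortest G w p ∧ ∀ e ∈ p.edges, e ∈ c.edges

/-!
Pick an edge `e` of `C` that is not an edge of `C'` (swapping the cycles if necessary) and delete it
from `C`: this leaves a path `L` through all vertices of `C`, and every common edge lies on `L`.
Let `a` and `b` be the common vertices of least and greatest position on `L`. Both cycles contain a
shortest `a`-`b` path, so by uniqueness the shortest path `q` lies in both, hence in `L`. Along a
path whose edges lie on `L`, the position on `L` changes by one at each step and never repeats, so
it is monotone: `q` is the segment of `L` from `a` to `b`, and therefore contains every common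
vertex and every common edge.
-/

theorem exists_eq_add_mul_of_injOn {g : ℕ → ℤ} {n : ℕ}
    (hstep : ∀ i < n, g (i + 1) = g i + 1 ∨ g (i + 1) = g i - 1)
    (hinj : Set.InjOn g (Set.Iic n)) :
    ∃ σ : ℤ, (σ = 1 ∨ σ = -1) ∧ ∀ i ≤ n, g i = g 0 + σ * i := by
  induction n with
  | zero => exact ⟨1, .inl rfl, fun i hi => by simp [Nat.le_zero.1 hi]⟩
  | succ n ih =>
    obtain ⟨σ, hσ, hg⟩ :=
      ih (fun i hi => hstep i (by omega)) (hinj.mono (Set.Iic_subset_Iic.2 n.le_succ))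
    cases n with
    | zero =>
      rcases hstep 0 one_pos with h | h
      · exact ⟨1, .inl rfl, fun i hi => by interval_cases i <;> simp [h]⟩
      · exact ⟨-1, .inr rfl, fun i hi => by interval_cases i <;> simp [h]; ring⟩
    | succ m =>
      refine ⟨σ, hσ, fun i hi => ?_⟩
      obtain hi | rfl := Nat.le_succ_iff.1 hi
      · exact hg i hi
      have hturn : g (m + 2) ≠ g m := fun h =>
        absurd (hinj (by simp) (by simp; omega) h) (by omega)
      have h1 := hg (m + 1) le_rfl
      have h0 := hg m (by omega)
      push_cast at h0 h1 ⊢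
      rcases hσ with rfl | rfl <;> rcases hstep (m + 1) (by omega) with h | h <;>
        first | linarith | exact absurd (by linarith) hturn

namespace SimpleGraph.Walk

variable {V : Type*} {G : SimpleGraph V}

theorem support_subset_of_edges_subset {u v s t : V} {q : G.Walk u v} {p : G.Walk s t}
    (hE : q.edges ⊆ p.edges) (hu : u ∈ p.support) : q.support ⊆ p.support := by
  induction q with
  | nil => simpa using hu
  | cons h q ih =>
    rw [edges_cons, List.cons_subset] at hE
    rw [support_cons, List.cons_subset]
    exact ⟨hu, ih hE.2 (p.snd_mem_support_of_mem_edges hE.1)⟩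

theorem IsCycle.exists_isPath_of_mem_edges {r : V} {c : G.Walk r r} (hc : c.IsCycle)
    {e : Sym2 V} (he : e ∈ c.edges) :
    ∃ (x y : V) (L : G.Walk x y), L.IsPath ∧ c.support ⊆ L.support ∧
      ∀ f ∈ c.edges, f ≠ e → f ∈ L.edges := by
  obtain ⟨d, hd, rfl⟩ := List.mem_map.1 he
  obtain ⟨ru, rv, rfl⟩ := (isSubwalk_toWalk_adj_iff_mem_darts c).2 hd
  refine ⟨d.snd, d.fst, rv.append ru, ?_, fun x hx => ?_, fun f hf hfe => ?_⟩
  · have := hc.support_nodup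
    simp only [support_append, support_cons, support_nil, List.tail_cons, List.append_assoc,
      List.cons_append, List.nil_append, cons_tail_support, ne_eq, support_ne_nil,
      not_false_eq_true, List.tail_append_of_ne_nil] at this
    rw [isPath_def, support_append]
    exact List.perm_append_comm.nodup_iff.1 this
  · simp only [support_append, support_cons, support_nil, List.tail_cons, List.append_assoc,
      List.cons_append, List.nil_append, cons_tail_support, List.mem_append] at hx ⊢
    rw [← cons_tail_support ru, List.mem_cons] at hx
    grind [end_mem_support]
  · simp only [edges_append, edges_cons, edges_nil, List.append_assoc, List.cons_append,
      List.nil_append, List.mem_append, List.mem_cons] at hf ⊢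
    tauto

section PathIndex

variable [DecidableEq V] {s t : V} {L : G.Walk s t}

theorem IsPath.idxOf_getVert (hL : L.IsPath) {k : ℕ} (hk : k ≤ L.length) :
    L.support.idxOf (L.getVert k) = k := by
  refine hL.getVert_injOn ?_ hk (L.getVert_support_idxOf (L.getVert_mem_support k))
  simpa [Nat.lt_succ_iff] using List.idxOf_lt_length_of_mem (L.getVert_mem_support k)

theorem IsPath.idxOf_of_mk_mem_edges (hL : L.IsPath) {x y : V} (h : s(x, y) ∈ L.edges) :
    (L.support.idxOf y : ℤ) = L.support.idxOf x + 1 ∨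
      (L.support.idxOf y : ℤ) = L.support.idxOf x - 1 := by
  obtain ⟨k, hk, hxy⟩ := (L.mk_mem_edges_iff_exists).1 h
  rcases Sym2.eq_iff.1 hxy with ⟨rfl, rfl⟩ | ⟨rfl, rfl⟩ <;>
    simp [hL.idxOf_getVert hk.le, hL.idxOf_getVert (Nat.succ_le_of_lt hk)]

variable {u v : V} {q : G.Walk u v}

theorem IsPath.exists_idxOf_getVert_eq_of_edges_subset (hL : L.IsPath) (hq : q.IsPath)
    (hqL : q.edges ⊆ L.edges) (hu : u ∈ L.support) :
    ∃ σ : ℤ, (σ = 1 ∨ σ = -1) ∧ ∀ i ≤ q.length,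
      (L.support.idxOf (q.getVert i) : ℤ) = L.support.idxOf u + σ * i := by
  have hqsub := support_subset_of_edges_subset hqL hu
  simpa using exists_eq_add_mul_of_injOn (g := fun i => (L.support.idxOf (q.getVert i) : ℤ))
    (fun i hi => hL.idxOf_of_mk_mem_edges (hqL (q.mk_mem_edges_iff_exists.2 ⟨i, hi, rfl⟩)))
    (fun i hi j hj hij => hq.getVert_injOn hi hj
      ((List.idxOf_inj (hqsub (q.getVert_mem_support i))).1 (Nat.cast_inj.1 hij)))

theorem IsPath.mem_support_of_edges_subset (hL : L.IsPath) (hq : q.IsPath)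
    (hqL : q.edges ⊆ L.edges) (hu : u ∈ L.support) {x : V} (hx : x ∈ L.support)
    (hux : L.support.idxOf u ≤ L.support.idxOf x) (hxv : L.support.idxOf x ≤ L.support.idxOf v) :
    x ∈ q.support := by
  obtain ⟨σ, hσ, hidx⟩ := hL.exists_idxOf_getVert_eq_of_edges_subset hq hqL hu
  have hv := hidx q.length le_rfl
  rw [getVert_length] at hv
  obtain ⟨i, hi, hix⟩ : ∃ i ≤ q.length,
      (L.support.idxOf (q.getVert i) : ℤ) = L.support.idxOf x := by
    rcases hσ with rfl | rfl
    · exact ⟨L.support.idxOf x - L.support.idxOf u, by omega, by rw [hidx _ (by omega)]; omega⟩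
    · exact ⟨0, by omega, by simp only [getVert_zero]; omega⟩
  obtain rfl := (List.idxOf_inj (support_subset_of_edges_subset hqL hu
    (q.getVert_mem_support i))).1 (Nat.cast_inj.1 hix)
  exact q.getVert_mem_support i

theorem IsPath.mk_mem_edges_of_edges_subset (hL : L.IsPath) (hq : q.IsPath)
    (hqL : q.edges ⊆ L.edges) (hu : u ∈ L.support) {x y : V} (hxy : s(x, y) ∈ L.edges)
    (hx : x ∈ q.support) (hy : y ∈ q.support) : s(x, y) ∈ q.edges := by
  obtain ⟨σ, hσ, hidx⟩ := hL.exists_idxOf_getVert_eq_of_edges_subset hq hqL hu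
  obtain ⟨i, rfl, hi⟩ := mem_support_iff_exists_getVert.1 hx
  obtain ⟨j, rfl, hj⟩ := mem_support_iff_exists_getVert.1 hy
  have hij := hL.idxOf_of_mk_mem_edges hxy
  rw [hidx i hi, hidx j hj] at hij
  rw [mk_mem_edges_iff_exists]
  obtain rfl | rfl : j = i + 1 ∨ i = j + 1 := by rcases hσ with rfl | rfl <;> omega
  · exact ⟨i, by omega, rfl⟩
  · exact ⟨j, by omega, Sym2.eq_swap⟩

end PathIndex

end SimpleGraph.Walk

open Walk

theorem exists_isShortest_edges_mem_inter {V : Type*} {G : SimpleGraph V} {w : Sym2 V → ℝ}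
    (huniq : UniqueShortestPaths G w) {r r' : V} {c : G.Walk r r} {c' : G.Walk r' r'}
    (hiso : IsIsometric G w c) (hiso' : IsIsometric G w c') {u v : V}
    (hu : u ∈ c.support ∧ u ∈ c'.support) (hv : v ∈ c.support ∧ v ∈ c'.support) :
    ∃ p : G.Walk u v, IsShortest G w p ∧ ∀ e ∈ p.edges, e ∈ c.edges ∧ e ∈ c'.edges := by
  obtain ⟨p, hp, hpc⟩ := hiso u v hu.1 hv.1
  obtain ⟨p', hp', hpc'⟩ := hiso' u v hu.2 hv.2
  obtain rfl := huniq u v p p' hp hp'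
  exact ⟨p, hp, fun e he => ⟨hpc e he, hpc' e he⟩⟩

theorem exists_isShortest_inter_eq_of_mem_edges_of_notMem {V : Type*} {G : SimpleGraph V}
    {w : Sym2 V → ℝ} (huniq : UniqueShortestPaths G w) {r r' : V} {c : G.Walk r r}
    {c' : G.Walk r' r'} (hc : c.IsCycle) (hiso : IsIsometric G w c)
    (hiso' : IsIsometric G w c') {e₀ : Sym2 V} (hec : e₀ ∈ c.edges) (hec' : e₀ ∉ c'.edges)
    (hne : ∃ x, x ∈ c.support ∧ x ∈ c'.support) :
    ∃ (a b : V) (q : G.Walk a b), IsShortest G w q ∧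
      (∀ x : V, (x ∈ c.support ∧ x ∈ c'.support) ↔ x ∈ q.support) ∧
      (∀ e : Sym2 V, (e ∈ c.edges ∧ e ∈ c'.edges) ↔ e ∈ q.edges) := by
  classical
  obtain ⟨s, t, L, hL, hcL, hLc⟩ := hc.exists_isPath_of_mem_edges hec
  have hLc' : ∀ f, f ∈ c.edges → f ∈ c'.edges → f ∈ L.edges :=
    fun f hf hf' => hLc f hf fun h => hec' (h ▸ hf')
  set T := c.support.toFinset.filter (· ∈ c'.support)
  have hT : ∀ x, x ∈ T ↔ x ∈ c.support ∧ x ∈ c'.support := by simp [T]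
  obtain ⟨x₀, hx₀⟩ := hne
  have hTne : T.Nonempty := ⟨x₀, (hT x₀).2 hx₀⟩
  obtain ⟨a, haT, ha⟩ := T.exists_min_image L.support.idxOf hTne
  obtain ⟨b, hbT, hb⟩ := T.exists_max_image L.support.idxOf hTne
  rw [hT] at haT hbT
  obtain ⟨q, hq, hqcc'⟩ := exists_isShortest_edges_mem_inter huniq hiso hiso' haT hbT
  have hqL : q.edges ⊆ L.edges := fun f hf => hLc' f (hqcc' f hf).1 (hqcc' f hf).2
  have haL : a ∈ L.support := hcL haT.1
  have hinter_q : ∀ x, x ∈ c.support ∧ x ∈ c'.support → x ∈ q.support := fun x hx =>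
    hL.mem_support_of_edges_subset hq.1 hqL haL (hcL hx.1) (ha x ((hT x).2 hx))
      (hb x ((hT x).2 hx))
  refine ⟨a, b, q, hq, fun x => ⟨hinter_q x, fun hx => ⟨?_, ?_⟩⟩, fun f => ⟨?_, hqcc' f⟩⟩
  · exact support_subset_of_edges_subset (fun f hf => (hqcc' f hf).1) haT.1 hx
  · exact support_subset_of_edges_subset (fun f hf => (hqcc' f hf).2) haT.2 hx
  · induction f using Sym2.ind with
    | _ x y =>
      rintro ⟨hf, hf'⟩
      exact hL.mk_mem_edges_of_edges_subset hq.1 hqL haL (hLc' _ hf hf')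
        (hinter_q x ⟨c.fst_mem_support_of_mem_edges hf, c'.fst_mem_support_of_mem_edges hf'⟩)
        (hinter_q y ⟨c.snd_mem_support_of_mem_edges hf, c'.snd_mem_support_of_mem_edges hf'⟩)

theorem isometric_cycles_inter_general
    {V : Type*} (G : SimpleGraph V) (w : Sym2 V → ℝ)
    (huniq : UniqueShortestPaths G w)
    {r r' : V} (c : G.Walk r r) (c' : G.Walk r' r')
    (hc : c.IsCycle) (hc' : c'.IsCycle)
    (hiso : IsIsometric G w c) (hiso' : IsIsometric G w c')
    (hdistinct : {e : Sym2 V | e ∈ c.edges} ≠ {e : Sym2 V | e ∈ c'.edges}) :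
    (∀ x : V, ¬(x ∈ c.support ∧ x ∈ c'.support)) ∨
    ∃ (a b : V) (q : G.Walk a b), IsShortest G w q ∧
      (∀ x : V, (x ∈ c.support ∧ x ∈ c'.support) ↔ x ∈ q.support) ∧
      (∀ e : Sym2 V, (e ∈ c.edges ∧ e ∈ c'.edges) ↔ e ∈ q.edges) := by
  refine or_iff_not_imp_left.2 fun hne => ?_
  simp only [not_forall, not_not] at hne
  obtain ⟨e, he⟩ : ∃ e, (e ∈ c.edges ∧ e ∉ c'.edges) ∨ (e ∈ c'.edges ∧ e ∉ c.edges) := by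
    by_contra! h
    exact hdistinct (Set.ext fun e => ⟨(h e).1, (h e).2⟩)
  rcases he with ⟨hec, hec'⟩ | ⟨hec', hec⟩
  · exact exists_isShortest_inter_eq_of_mem_edges_of_notMem huniq hc hiso hiso' hec hec' hne
  · obtain ⟨x, hx, hx'⟩ := hne
    obtain ⟨a, b, q, hq, hV, hE⟩ :=
      exists_isShortest_inter_eq_of_mem_edges_of_notMem huniq hc' hiso' hiso hec' hec ⟨x, hx', hx⟩
    exact ⟨a, b, q, hq, fun x => and_comm.trans (hV x), fun f => and_comm.trans (hE f)⟩

/-- In a graph with unique shortest paths, the intersection of two distinct isometric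
cycles `C` and `C'` (common vertices and common edges) is either empty or a single
shortest path. -/
theorem isometric_cycles_inter
    {V : Type*} (G : SimpleGraph V) (w : Sym2 V → ℝ)
    (hw : ∀ e, 0 ≤ w e)
    (huniq : UniqueShortestPaths G w)
    {r r' : V} (c : G.Walk r r) (c' : G.Walk r' r')
    (hc : c.IsCycle) (hc' : c'.IsCycle)
    (hiso : IsIsometric G w c) (hiso' : IsIsometric G w c')
    (hdistinct : {e : Sym2 V | e ∈ c.edges} ≠ {e : Sym2 V | e ∈ c'.edges}) :
    (∀ x : V, ¬(x ∈ c.support ∧ x ∈ c'.support)) ∨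
    ∃ (a b : V) (q : G.Walk a b), IsShortest G w q ∧
      (∀ x : V, (x ∈ c.support ∧ x ∈ c'.support) ↔ x ∈ q.support) ∧
      (∀ e : Sym2 V, (e ∈ c.edges ∧ e ∈ c'.edges) ↔ e ∈ q.edges) :=
  isometric_cycles_inter_general G w huniq c c' hc hc' hiso hiso' hdistinct
end

section
/- Every cycle in a minimum cycle basis of a weighted graph is isometric: for any two vertices u, v on such a cycle C, C contains a shortest u-v path of G. -/
open SimpleGraph

variable {V : Type*} [Fintype V] [DecidableEq V]

/-- The incidence vector over GF(2) of (the edge set of) a closed walk. -/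
def cycleVec {G : SimpleGraph V} (c : Σ v : V, G.Walk v v) : Sym2 V → ZMod 2 :=
  fun e => if e ∈ c.2.edges then 1 else 0

/-- The cycle space of `G`: the GF(2)-span of incidence vectors of cycles. -/
def cycleSpace (G : SimpleGraph V) : Submodule (ZMod 2) (Sym2 V → ZMod 2) :=
  Submodule.span (ZMod 2)
    {x | ∃ c : Σ v : V, G.Walk v v, c.2.IsCycle ∧ x = cycleVec c}

/-- `B` is a cycle basis of `G`: a set of cycles whose GF(2) incidence vectors form
a basis of the cycle space. -/
def IsCycleBasis (G : SimpleGraph V) (B : Finset (Σ v : V, G.Walk v v)) : Prop :=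
  (∀ c ∈ B, c.2.IsCycle) ∧
  LinearIndependent (ZMod 2) (fun c : B => cycleVec c.1) ∧
  Submodule.span (ZMod 2) (Set.range fun c : B => cycleVec c.1) = cycleSpace G

/-- The total weight of a set of cycles. -/
def basisWeight (w : Sym2 V → ℝ) {G : SimpleGraph V}
    (B : Finset (Σ v : V, G.Walk v v)) : ℝ :=
  ∑ c ∈ B, walkWeight w c.2


/-!
Split the cycle `C` at `u` and `v` into arcs `P : u ⟶ v` and `Q : v ⟶ u` and let `p` be a
shortest `u`-`v` path. Over GF(2), `C = (P + p) + (p + Q)`, and `C` is not in the span of the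
other basis cycles, so one of the closed walks `P p⁻¹`, `p Q` is not either. The parity vector
of a closed walk is a sum of cycles on its edges, one of which, `D`, then lies outside that
span and can replace `C` in the basis. Minimality gives `w(C) ≤ w(D) ≤ w(P) + w(p)` (or
`w(p) + w(Q)`), so the remaining arc weighs at most `w(p)` and is a shortest path inside `C`.
-/

section Weight

variable {V : Type*} {G : SimpleGraph V} {w : Sym2 V → ℝ}

lemma walkWeight_nonneg (hw : ∀ e, 0 ≤ w e) {u v : V} (p : G.Walk u v) :
    0 ≤ walkWeight w p :=
  List.sum_nonneg (by simp [hw])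

lemma walkWeight_append {u v x : V} (p : G.Walk u v) (q : G.Walk v x) :
    walkWeight w (p.append q) = walkWeight w p + walkWeight w q := by
  simp [walkWeight]

lemma walkWeight_eq_of_perm {u v x y : V} {p : G.Walk u v} {q : G.Walk x y}
    (h : p.edges.Perm q.edges) : walkWeight w p = walkWeight w q :=
  (h.map w).sum_eq

lemma walkWeight_reverse {u v : V} (p : G.Walk u v) : walkWeight w p.reverse = walkWeight w p :=
  walkWeight_eq_of_perm (by simp)

lemma walkWeight_le_of_edges_subset (hw : ∀ e, 0 ≤ w e) {u v x y : V} {p : G.Walk u v}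
    {q : G.Walk x y} (hp : p.edges.Nodup) (h : p.edges ⊆ q.edges) :
    walkWeight w p ≤ walkWeight w q := by
  obtain ⟨l, hl, hlq⟩ := List.subperm_of_subset hp h
  rw [walkWeight, walkWeight, ← (hl.map w).sum_eq]
  exact (hlq.map w).sum_le_sum (by simp [hw])

lemma isShortest_nil (hw : ∀ e, 0 ≤ w e) (u : V) : IsShortest G w (Walk.nil : G.Walk u u) :=
  ⟨.nil, fun q _ => by simpa [walkWeight] using walkWeight_nonneg hw q⟩

lemma IsShortest.of_walkWeight_le {u v : V} {p q : G.Walk u v} (hp : IsShortest G w p)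
    (hq : q.IsPath) (h : walkWeight w q ≤ walkWeight w p) : IsShortest G w q :=
  ⟨hq, fun r hr => h.trans (hp.2 r hr)⟩

lemma exists_isShortest [Finite V] {u v : V} (h : G.Reachable u v) :
    ∃ p : G.Walk u v, IsShortest G w p := by
  classical
  have := Fintype.ofFinite V
  obtain ⟨q, -, hq⟩ := Finset.exists_min_image Finset.univ
    (fun q : G.Path u v => walkWeight w q.1) ⟨h.some.toPath, Finset.mem_univ _⟩
  exact ⟨q.1, q.2, fun r hr => hq ⟨r, hr⟩ (Finset.mem_univ _)⟩

end Weight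

lemma SimpleGraph.Walk.IsCycle.exists_arcs {V : Type*} {G : SimpleGraph V} [DecidableEq V]
    {r u v : V} {c : G.Walk r r} (hc : c.IsCycle) (hu : u ∈ c.support) (hv : v ∈ c.support)
    (huv : u ≠ v) : ∃ (p : G.Walk u v) (q : G.Walk v u),
      p.IsPath ∧ q.IsPath ∧ c.edges.Perm (p.append q).edges := by
  set d := c.rotate u hu
  have hd : d.IsCycle := hc.rotate hu
  have hv' : v ∈ d.support := (c.mem_support_rotate_iff u hu).2 hv
  refine ⟨d.takeUntil v hv', d.dropUntil v hv', hd.isPath_takeUntil hv', ?_, ?_⟩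
  · rw [← d.take_spec hv'] at hd
    exact hd.isPath_of_append_right (Walk.not_nil_of_ne huv)
  · rw [Walk.take_spec]
    exact (c.rotate_edges u hu).perm.symm

section Parity

variable {V : Type*} [DecidableEq V] {G : SimpleGraph V}

def parityVec {u v : V} (p : G.Walk u v) : Sym2 V → ZMod 2 :=
  fun e => (p.edges.count e : ZMod 2)

@[simp]
lemma parityVec_nil (u : V) : parityVec (Walk.nil : G.Walk u u) = 0 := by
  ext; simp [parityVec]

lemma parityVec_append {u v x : V} (p : G.Walk u v) (q : G.Walk v x) :
    parityVec (p.append q) = parityVec p + parityVec q := by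
  ext; simp [parityVec]

lemma parityVec_eq_of_perm {u v x y : V} {p : G.Walk u v} {q : G.Walk x y}
    (h : p.edges.Perm q.edges) : parityVec p = parityVec q := by
  ext e; simp [parityVec, h.count_eq]

@[simp]
lemma parityVec_reverse {u v : V} (p : G.Walk u v) : parityVec p.reverse = parityVec p :=
  parityVec_eq_of_perm (by simp)

lemma parityVec_cons {u v x : V} (h : G.Adj u v) (p : G.Walk v x) :
    parityVec (Walk.cons h p) = parityVec (h.toWalk) + parityVec p := by
  rw [← Walk.cons_nil_append, parityVec_append]

/-- The edges of `r` are traversed twice on the right-hand side and cancel over GF(2). -/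
lemma parityVec_append_eq_add {u v : V} (p r : G.Walk u v) (q : G.Walk v u) :
    parityVec (p.append q) = parityVec (p.append r.reverse) + parityVec (r.append q) := by
  ext e
  simp only [parityVec_append, parityVec_reverse, Pi.add_apply]
  linear_combination -CharTwo.add_self_eq_zero (parityVec r e)

def cycleSpaceWithin (G : SimpleGraph V) (l : List (Sym2 V)) :
    Submodule (ZMod 2) (Sym2 V → ZMod 2) :=
  Submodule.span (ZMod 2) (cycleVec '' {c : Σ v : V, G.Walk v v | c.2.IsCycle ∧ c.2.edges ⊆ l})

lemma cycleSpaceWithin_mono {l l' : List (Sym2 V)} (h : l ⊆ l') :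
    cycleSpaceWithin G l ≤ cycleSpaceWithin G l' :=
  Submodule.span_mono (Set.image_mono fun _ hc => ⟨hc.1, List.Subset.trans hc.2 h⟩)

lemma cycleVec_eq_parityVec {c : Σ v : V, G.Walk v v} (hc : c.2.IsTrail) :
    cycleVec c = parityVec c.2 := by
  ext e
  by_cases he : e ∈ c.2.edges
  · simp [cycleVec, parityVec, he, List.count_eq_one_of_mem hc.edges_nodup he]
  · simp [cycleVec, parityVec, he, List.count_eq_zero_of_not_mem he]

lemma parityVec_cons_mem_cycleSpaceWithin {u v : V} (h : G.Adj u v) {p : G.Walk v u}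
    (hp : p.IsPath) : parityVec (Walk.cons h p) ∈ cycleSpaceWithin G (Walk.cons h p).edges := by
  by_cases he : s(u, v) ∈ p.edges
  -- then `p` is the edge `h` traversed back, so each edge occurs twice
  · rw [hp.eq_adj_toWalk_of_mem_edges (Sym2.eq_swap ▸ he)]
    convert Submodule.zero_mem _
    ext e
    simp only [parityVec, Walk.edges_cons, Walk.edges_nil, List.count_cons, List.count_nil,
      Sym2.eq_swap (a := v), Pi.zero_apply]
    split_ifs <;> rfl
  · have hc : (Walk.cons h p).IsCycle := (Walk.cons_isCycle_iff p h).2 ⟨hp, he⟩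
    exact Submodule.subset_span
      ⟨⟨u, _⟩, ⟨hc, List.Subset.refl _⟩, cycleVec_eq_parityVec hc.isTrail⟩

lemma SimpleGraph.Walk.exists_isPath_parityVec_sub_mem {u v : V} (p : G.Walk u v) :
    ∃ q : G.Walk u v, q.IsPath ∧ q.edges ⊆ p.edges ∧
      parityVec p - parityVec q ∈ cycleSpaceWithin G p.edges := by
  induction p with
  | nil => exact ⟨.nil, .nil, List.Subset.refl _, by simp⟩
  | @cons x y v h p ih =>
    obtain ⟨q, hq, hqp, hmem⟩ := ih
    have hsub : p.edges ⊆ (Walk.cons h p).edges := List.subset_cons_self _ _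
    replace hmem := cycleSpaceWithin_mono hsub hmem
    by_cases hx : x ∈ q.support
    -- the prefix of `q` up to `x` closes up with `h` into a loop; keep the suffix
    · refine ⟨q.dropUntil x hx, hq.dropUntil hx,
        List.Subset.trans (q.edges_dropUntil_subset_edges hx) (List.Subset.trans hqp hsub), ?_⟩
      have hloop : parityVec (Walk.cons h (q.takeUntil x hx)) ∈
          cycleSpaceWithin G (Walk.cons h p).edges := by
        refine cycleSpaceWithin_mono ?_ (parityVec_cons_mem_cycleSpaceWithin h (hq.takeUntil hx))
        rw [Walk.edges_cons, Walk.edges_cons]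
        exact List.cons_subset_cons _ (List.Subset.trans (q.edges_takeUntil_subset_edges hx) hqp)
      have hq_split :
          parityVec q = parityVec (q.takeUntil x hx) + parityVec (q.dropUntil x hx) := by
        rw [← parityVec_append, q.take_spec hx]
      convert add_mem hmem hloop using 1
      rw [parityVec_cons h p, parityVec_cons h (q.takeUntil x hx), hq_split]
      abel
    · refine ⟨Walk.cons h q, hq.cons hx, List.cons_subset_cons _ hqp, ?_⟩
      rwa [parityVec_cons h p, parityVec_cons h q, add_sub_add_left_eq_sub]

lemma SimpleGraph.Walk.parityVec_mem_cycleSpaceWithin {u : V} (p : G.Walk u u) :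
    parityVec p ∈ cycleSpaceWithin G p.edges := by
  obtain ⟨q, hq, -, h⟩ := p.exists_isPath_parityVec_sub_mem
  simpa [(Walk.isPath_iff_nil.mp hq).eq_nil] using h

end Parity

section Exchange

variable {V : Type*} [DecidableEq V] {G : SimpleGraph V} {w : Sym2 V → ℝ}
  {B : Finset (Σ v : V, G.Walk v v)}

lemma cycleVec_mem_cycleSpace {c : Σ v : V, G.Walk v v} (hc : c.2.IsCycle) :
    cycleVec c ∈ cycleSpace G :=
  Submodule.subset_span ⟨c, hc, rfl⟩

lemma span_range_cycleVec_eq_span_image (B : Finset (Σ v : V, G.Walk v v)) :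
    Submodule.span (ZMod 2) (Set.range fun c : B => cycleVec c.1) =
      Submodule.span (ZMod 2) (cycleVec '' (B : Set (Σ v : V, G.Walk v v))) := by
  rw [Set.image_eq_range]
  rfl

lemma IsCycleBasis.linearIndepOn (hB : IsCycleBasis G B) :
    LinearIndepOn (ZMod 2) cycleVec (B : Set (Σ v : V, G.Walk v v)) :=
  hB.2.1

lemma IsCycleBasis.span_image (hB : IsCycleBasis G B) :
    Submodule.span (ZMod 2) (cycleVec '' (B : Set (Σ v : V, G.Walk v v))) = cycleSpace G :=
  (span_range_cycleVec_eq_span_image B).symm.trans hB.2.2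

lemma IsCycleBasis.exchange (hB : IsCycleBasis G B) {C D : Σ v : V, G.Walk v v} (hC : C ∈ B)
    (hD : D.2.IsCycle) (hDS : cycleVec D ∉ Submodule.span (ZMod 2) (cycleVec '' (↑B \ {C}))) :
    IsCycleBasis G (insert D (B.erase C)) := by
  have hcoe : ((insert D (B.erase C) : Finset (Σ v : V, G.Walk v v)) :
      Set (Σ v : V, G.Walk v v)) = insert D (↑B \ {C}) := by
    simp
  have hspanB : cycleSpace G =
      Submodule.span (ZMod 2) (insert (cycleVec C) (cycleVec '' (↑B \ {C}))) := by
    rw [← hB.span_image, ← Set.image_insert_eq, Set.insert_sdiff_singleton,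
      Set.insert_eq_of_mem (Finset.mem_coe.2 hC)]
  have hC_mem :
      cycleVec C ∈ Submodule.span (ZMod 2) (insert (cycleVec D) (cycleVec '' (↑B \ {C}))) :=
    mem_span_insert_exchange (hspanB ▸ cycleVec_mem_cycleSpace hD) hDS
  refine ⟨?_, ?_, ?_⟩
  · simp only [Finset.mem_insert, Finset.mem_erase]
    rintro c (rfl | ⟨-, hc⟩)
    exacts [hD, hB.1 c hc]
  · change LinearIndepOn (ZMod 2) cycleVec
      ((insert D (B.erase C) : Finset (Σ v : V, G.Walk v v)) : Set (Σ v : V, G.Walk v v))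
    rw [hcoe]
    exact (hB.linearIndepOn.mono Set.sdiff_subset).insert hDS
  · rw [span_range_cycleVec_eq_span_image, hcoe, Set.image_insert_eq]
    apply le_antisymm
    · refine Submodule.span_le.2 (Set.insert_subset (cycleVec_mem_cycleSpace hD) ?_)
      rw [← hB.span_image]
      exact (Set.image_mono Set.sdiff_subset).trans Submodule.subset_span
    · rw [hspanB]
      exact Submodule.span_le.2
        (Set.insert_subset hC_mem ((Set.subset_insert _ _).trans Submodule.subset_span))

def IsMinimumCycleBasis (G : SimpleGraph V) (w : Sym2 V → ℝ)
    (B : Finset (Σ v : V, G.Walk v v)) : Prop :=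
  IsCycleBasis G B ∧ ∀ B' : Finset (Σ v : V, G.Walk v v),
    IsCycleBasis G B' → basisWeight w B ≤ basisWeight w B'

lemma IsMinimumCycleBasis.walkWeight_le_of_notMem_span (hB : IsMinimumCycleBasis G w B)
    {C D : Σ v : V, G.Walk v v} (hC : C ∈ B) (hD : D.2.IsCycle)
    (hDS : cycleVec D ∉ Submodule.span (ZMod 2) (cycleVec '' (↑B \ {C}))) :
    walkWeight w C.2 ≤ walkWeight w D.2 := by
  have hDB : D ∉ B.erase C := fun h =>
    hDS (Submodule.subset_span ⟨D, by simpa [and_comm] using h, rfl⟩)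
  have := hB.2 _ (hB.1.exchange hC hD hDS)
  rw [basisWeight, basisWeight, Finset.sum_insert hDB, Finset.sum_erase_eq_sub hC] at this
  linarith

lemma IsMinimumCycleBasis.walkWeight_le_of_parityVec_notMem_span (hw : ∀ e, 0 ≤ w e)
    (hB : IsMinimumCycleBasis G w B) {C : Σ v : V, G.Walk v v} (hC : C ∈ B) {x : V}
    (W : G.Walk x x) (hW : parityVec W ∉ Submodule.span (ZMod 2) (cycleVec '' (↑B \ {C}))) :
    walkWeight w C.2 ≤ walkWeight w W := by
  have : ¬ cycleVec '' {c : Σ v : V, G.Walk v v | c.2.IsCycle ∧ c.2.edges ⊆ W.edges} ⊆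
      Submodule.span (ZMod 2) (cycleVec '' (↑B \ {C})) :=
    fun h => hW (Submodule.span_le.2 h W.parityVec_mem_cycleSpaceWithin)
  obtain ⟨_, ⟨D, ⟨hD, hDW⟩, rfl⟩, hDS⟩ := Set.not_subset.1 this
  exact (hB.walkWeight_le_of_notMem_span hC hD hDS).trans
    (walkWeight_le_of_edges_subset hw hD.edges_nodup hDW)

end Exchange

/-- Every cycle in a minimum cycle basis of a weighted graph is isometric: for any two
vertices `u`, `v` on such a cycle `C`, `C` contains a shortest `u`-`v` path of `G`. -/
theorem minimumCycleBasis_isometric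
    (G : SimpleGraph V) (w : Sym2 V → ℝ) (hw : ∀ e, 0 ≤ w e)
    (B : Finset (Σ v : V, G.Walk v v))
    (hB : IsCycleBasis G B)
    (hmin : ∀ B' : Finset (Σ v : V, G.Walk v v),
      IsCycleBasis G B' → basisWeight w B ≤ basisWeight w B') :
    ∀ c ∈ B, IsIsometric G w c.2 := by
  have hBmin : IsMinimumCycleBasis G w B := ⟨hB, hmin⟩
  intro c hc u v hu hv
  obtain rfl | huv := eq_or_ne u v
  · exact ⟨.nil, isShortest_nil hw u, by simp⟩
  have hcyc := hB.1 c hc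
  obtain ⟨P, Q, hP, hQ, hperm⟩ := hcyc.exists_arcs hu hv huv
  obtain ⟨p, hp⟩ := exists_isShortest (w := w) ⟨P⟩
  have hPQ : ∀ e, e ∈ P.edges ∨ e ∈ Q.edges → e ∈ c.2.edges :=
    fun e he => hperm.mem_iff.2 (by simpa using he)
  have hc_weight : walkWeight w c.2 = walkWeight w P + walkWeight w Q := by
    rw [walkWeight_eq_of_perm hperm, walkWeight_append]
  have hc_indep := hB.linearIndepOn.notMem_span hc
  rw [cycleVec_eq_parityVec hcyc.isTrail, parityVec_eq_of_perm hperm,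
    parityVec_append_eq_add P p Q] at hc_indep
  rcases not_and_or.1 fun h => hc_indep (add_mem h.1 h.2) with h | h
  · have := hBmin.walkWeight_le_of_parityVec_notMem_span hw hc _ h
    rw [hc_weight, walkWeight_append, walkWeight_reverse] at this
    exact ⟨Q.reverse, hp.of_walkWeight_le hQ.reverse (by rw [walkWeight_reverse]; linarith),
      fun e he => hPQ e (Or.inr (by simpa using he))⟩
  · have := hBmin.walkWeight_le_of_parityVec_notMem_span hw hc _ h
    rw [hc_weight, walkWeight_append] at this
    exact ⟨P, hp.of_walkWeight_le hP (by linarith), fun e he => hPQ e (Or.inl he)⟩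
end
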